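/- Let O be a maximal order in a quaternion algebra ℍ(K) of class number 1, and let q ∈ O be O-primitive with π ∈ O_K a prime dividing nr(q). Then q factors as q = r·p with r, p ∈ O and nr(p) an associate of π. -/

import Mathlib

open Quaternion NumberField

/-!
Elements of an `𝓞 K`-order are integral over the integrally closed ring `𝓞 K`, so their reduced
trace and norm lie in `𝓞 K`; hence an order is closed under conjugation, and an element whose
norm is a unit is invertible in it.

Write the principal left ideal `O q + O π` as `O d`, so that `q = r d` and `π = s d`, whence
`nr(s) nr(d) = π²`. If `nr(d)` were a unit then `1 = a q + b π`, and since `π ∣ q q̄` this gives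
`q̄ = a q q̄ + b π q̄ ∈ π O`. If `nr(s)` were a unit then `d = s⁻¹ π ∈ π O`. Either way
`q ∈ π O`, contradicting primitivity, so `nr(d)` is an associate of `π`.
-/

section Commute

variable {R A : Type*} [CommRing R] [Ring A] [Algebra R A] {x y : A}

open scoped IsMulCommutative in
theorem IsIntegral.of_mem_adjoin_pair_of_commute (h : Commute x y) (hx : IsIntegral R x)
    (hy : IsIntegral R y) {z : A} (hz : z ∈ Algebra.adjoin R {x, y}) : IsIntegral R z := by
  let S := Algebra.adjoin R ({x, y} : Set A)
  have : IsMulCommutative S := Algebra.isMulCommutative_adjoin R <| by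
    rintro a (rfl | rfl) b (rfl | rfl) <;> first | rfl | exact h | exact h.symm
  have hS : IsIntegral R (⟨z, hz⟩ : S) := by
    have : Algebra.adjoin R (Subtype.val ⁻¹' {x, y} : Set S) ≤ integralClosure R S :=
      Algebra.adjoin_le <| by
        rintro ⟨w, hw⟩ (rfl | rfl : w = x ∨ w = y)
        · exact (isIntegral_algHom_iff S.val Subtype.val_injective).1 hx
        · exact (isIntegral_algHom_iff S.val Subtype.val_injective).1 hy
    rw [Algebra.adjoin_adjoin_coe_preimage] at this
    exact this Algebra.mem_top
  exact (isIntegral_algHom_iff S.val Subtype.val_injective).2 hS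

end Commute

theorem Prime.associated_of_mul_eq_sq {M : Type*} [CommMonoidWithZero M] [IsCancelMulZero M]
    {p a b : M} (hp : Prime p) (h : a * b = p ^ 2) (ha : ¬IsUnit a) (hb : ¬IsUnit b) :
    Associated p b := by
  obtain ⟨i, hi, hbi⟩ := (dvd_prime_pow hp 2).1 (Dvd.intro_left a h)
  interval_cases i
  · exact absurd (associated_one_iff_isUnit.1 (by simpa using hbi)) hb
  · simpa using hbi.symm
  · obtain ⟨u, hu⟩ := hbi
    have hb0 : b ≠ 0 := by
      rintro rfl
      exact pow_ne_zero 2 hp.ne_zero (by rw [← h, mul_zero])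
    rw [← h, mul_comm a b] at hu
    exact absurd (mul_left_cancel₀ hb0 hu ▸ u.isUnit) ha

namespace Subalgebra

variable {R A : Type*} [CommRing R] [Ring A] [Algebra R A]

def IsLeftIdeal (O : Subalgebra R A) (I : Submodule R A) : Prop :=
  ∀ c ∈ O, ∀ x ∈ I, c * x ∈ I

theorem IsLeftIdeal.sup {O : Subalgebra R A} {I J : Submodule R A} (hI : O.IsLeftIdeal I)
    (hJ : O.IsLeftIdeal J) : O.IsLeftIdeal (I ⊔ J) := by
  intro c hc x hx
  obtain ⟨y, hy, z, hz, rfl⟩ := Submodule.mem_sup.1 hx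
  rw [mul_add]
  exact Submodule.add_mem_sup (hI c hc y hy) (hJ c hc z hz)

theorem isLeftIdeal_map_mulRight (O : Subalgebra R A) (x : A) :
    O.IsLeftIdeal (O.toSubmodule.map (LinearMap.mulRight R x)) := by
  rintro c hc _ ⟨a, ha, rfl⟩
  exact ⟨c * a, O.mul_mem hc ha, mul_assoc c a x⟩

theorem map_mulRight_le (O : Subalgebra R A) {x : A} (hx : x ∈ O) :
    O.toSubmodule.map (LinearMap.mulRight R x) ≤ O.toSubmodule := by
  rintro _ ⟨a, ha, rfl⟩
  exact O.mul_mem ha hx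

theorem mul_mem_map_mulRight (O : Subalgebra R A) {y : A} (hy : y ∈ O) (x : A) :
    y * x ∈ O.toSubmodule.map (LinearMap.mulRight R x) :=
  ⟨y, hy, rfl⟩

theorem mem_map_mulRight_self (O : Subalgebra R A) (x : A) :
    x ∈ O.toSubmodule.map (LinearMap.mulRight R x) :=
  ⟨1, O.one_mem, one_mul x⟩

end Subalgebra

namespace Quaternion

/- These lemmas are stated for `𝓞 K` rather than an arbitrary integrally closed `R` with fraction
field `K`: the `𝓞 K`-algebra structure on `ℍ[K]` is `RingOfIntegers.instAlgebra`, which is not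
reducibly equal to the one `ℍ[K]` inherits from `Algebra R K`. -/
variable {K : Type*} [Field K]

theorem algebraMap_eq_coe_algebraMap (r : 𝓞 K) :
    algebraMap (𝓞 K) ℍ[K] r = ((algebraMap (𝓞 K) K r : K) : ℍ[K]) :=
  IsScalarTower.algebraMap_apply (𝓞 K) K ℍ[K] r

theorem star_algebraMap (r : 𝓞 K) : star (algebraMap (𝓞 K) ℍ[K] r) = algebraMap (𝓞 K) ℍ[K] r := by
  rw [algebraMap_eq_coe_algebraMap, star_coe]

theorem isIntegral_star {x : ℍ[K]} (hx : IsIntegral (𝓞 K) x) : IsIntegral (𝓞 K) (star x) := by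
  obtain ⟨f, hmonic, hf⟩ := hx
  refine ⟨f, hmonic, MulOpposite.op_injective ?_⟩
  rw [← Polynomial.aeval_def] at hf ⊢
  rw [← Polynomial.aeval_op_apply, MulOpposite.op_zero]
  exact (Polynomial.aeval_algHom_apply ((starAe (R := K)).restrictScalars (𝓞 K)) x f).trans
    (by rw [hf, map_zero])

theorem isIntegral_coe_iff {k : K} : IsIntegral (𝓞 K) (k : ℍ[K]) ↔ IsIntegral (𝓞 K) k :=
  isIntegral_algebraMap_iff (A := K) (B := ℍ[K]) coe_injective

variable [NumberField K]

theorem exists_algebraMap_eq_two_mul_re {x : ℍ[K]} (hx : IsIntegral (𝓞 K) x) :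
    ∃ t : 𝓞 K, algebraMap (𝓞 K) K t = 2 * x.re := by
  refine IsIntegrallyClosed.isIntegral_iff.1 (isIntegral_coe_iff.1 ?_)
  rw [← self_add_star']
  exact hx.of_mem_adjoin_pair_of_commute (star_comm_self' x).symm (isIntegral_star hx)
    (add_mem (Algebra.subset_adjoin (by simp)) (Algebra.subset_adjoin (by simp)))

theorem exists_algebraMap_eq_normSq {x : ℍ[K]} (hx : IsIntegral (𝓞 K) x) :
    ∃ n : 𝓞 K, algebraMap (𝓞 K) K n = normSq x := by
  refine IsIntegrallyClosed.isIntegral_iff.1 (isIntegral_coe_iff.1 ?_)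
  rw [← self_mul_star]
  exact hx.of_mem_adjoin_pair_of_commute (star_comm_self' x).symm (isIntegral_star hx)
    (mul_mem (Algebra.subset_adjoin (by simp)) (Algebra.subset_adjoin (by simp)))

variable {O : Subalgebra (𝓞 K) ℍ[K]}

theorem star_mem_of_fg (hO : O.toSubmodule.FG) {x : ℍ[K]} (hx : x ∈ O) : star x ∈ O := by
  obtain ⟨t, ht⟩ := exists_algebraMap_eq_two_mul_re (IsIntegral.of_mem_of_fg O hO x hx)
  have : star x = algebraMap (𝓞 K) ℍ[K] t - x := by
    rw [algebraMap_eq_coe_algebraMap, ht, ← self_add_star', add_sub_cancel_left]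
  exact this ▸ O.sub_mem (O.algebraMap_mem t) hx

theorem exists_mul_eq_one_of_isUnit_normSq (hO : O.toSubmodule.FG) {x : ℍ[K]} (hx : x ∈ O)
    {n : 𝓞 K} (hn : algebraMap (𝓞 K) K n = normSq x) (hu : IsUnit n) : ∃ y ∈ O, y * x = 1 := by
  refine ⟨algebraMap (𝓞 K) ℍ[K] ↑hu.unit⁻¹ * star x,
    O.mul_mem (O.algebraMap_mem _) (star_mem_of_fg hO hx), ?_⟩
  rw [mul_assoc, star_mul_self, ← hn, ← algebraMap_eq_coe_algebraMap, ← map_mul,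
    hu.val_inv_mul, map_one]

theorem exists_eq_algebraMap_mul_of_mul_add_mul_eq_one (hO : O.toSubmodule.FG)
    {q a b : ℍ[K]} (hq : q ∈ O) (ha : a ∈ O) (hb : b ∈ O) {π c : 𝓞 K}
    (hN : normSq q = algebraMap (𝓞 K) K (π * c))
    (hab : a * q + b * algebraMap (𝓞 K) ℍ[K] π = 1) :
    ∃ e ∈ O, q = algebraMap (𝓞 K) ℍ[K] π * e := by
  have hqq : q * star q = algebraMap (𝓞 K) ℍ[K] π * algebraMap (𝓞 K) ℍ[K] c := by
    rw [self_mul_star, hN, ← algebraMap_eq_coe_algebraMap, map_mul]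
  set f := a * algebraMap (𝓞 K) ℍ[K] c + b * star q
  have hstar : star q = algebraMap (𝓞 K) ℍ[K] π * f := calc
    star q = (a * q + b * algebraMap (𝓞 K) ℍ[K] π) * star q := by rw [hab, one_mul]
    _ = a * (q * star q) + b * (algebraMap (𝓞 K) ℍ[K] π * star q) := by
      rw [add_mul, mul_assoc, mul_assoc]
    _ = algebraMap (𝓞 K) ℍ[K] π * f := by
      rw [hqq, Algebra.left_comm a, Algebra.left_comm b, ← mul_add]
  refine ⟨star f, star_mem_of_fg hO (O.add_mem (O.mul_mem ha (O.algebraMap_mem c))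
      (O.mul_mem hb (star_mem_of_fg hO hq))), ?_⟩
  calc q = star (star q) := (star_star q).symm
    _ = algebraMap (𝓞 K) ℍ[K] π * star f := by
      rw [hstar, star_mul, star_algebraMap, Algebra.commutes]

theorem mul_eq_sq_of_mul_eq_algebraMap {s d : ℍ[K]} {π ns nd : 𝓞 K}
    (hsd : s * d = algebraMap (𝓞 K) ℍ[K] π) (hns : algebraMap (𝓞 K) K ns = normSq s)
    (hnd : algebraMap (𝓞 K) K nd = normSq d) : ns * nd = π ^ 2 := by
  apply IsFractionRing.injective (𝓞 K) K
  rw [map_mul, hns, hnd, ← map_mul, hsd, algebraMap_eq_coe_algebraMap, normSq_coe, map_pow]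

theorem exists_eq_algebraMap_mul_of_mul_eq_algebraMap (hO : O.toSubmodule.FG) {s d : ℍ[K]}
    (hs : s ∈ O) {π ns : 𝓞 K} (hns : algebraMap (𝓞 K) K ns = normSq s) (hu : IsUnit ns)
    (hsd : s * d = algebraMap (𝓞 K) ℍ[K] π) : ∃ e ∈ O, d = algebraMap (𝓞 K) ℍ[K] π * e := by
  obtain ⟨y, hy, hys⟩ := exists_mul_eq_one_of_isUnit_normSq hO hs hns hu
  refine ⟨y, hy, ?_⟩
  rw [Algebra.commutes, ← hsd, ← mul_assoc, hys, one_mul]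

end Quaternion

theorem stmt15_general {K : Type*} [Field K] [NumberField K]
    (O : Subalgebra (𝓞 K) ℍ[K]) (hfg : O.toSubmodule.FG)
    (hclass : ∀ I : Submodule (𝓞 K) ℍ[K], I ≤ O.toSubmodule →
      (∀ c ∈ O, ∀ x ∈ I, c * x ∈ I) →
      ∃ d ∈ O, I = Submodule.map (@LinearMap.mulRight (𝓞 K) ℍ[K] _ _ _ IsScalarTower.right d) O.toSubmodule)
    (q : ℍ[K]) (hqO : q ∈ O)
    (hprim : ∀ (α : 𝓞 K) (r : ℍ[K]), r ∈ O →
      q = algebraMap (𝓞 K) ℍ[K] α * r → IsUnit α)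
    (π : 𝓞 K) (hπ : Prime π)
    (hπdvd : ∃ c : 𝓞 K, normSq q = algebraMap (𝓞 K) K (π * c)) :
    ∃ r p : ℍ[K], r ∈ O ∧ p ∈ O ∧ q = r * p ∧
      ∃ u : (𝓞 K)ˣ, normSq p = algebraMap (𝓞 K) K (π * (u : 𝓞 K)) := by
  have hπq : ∀ e ∈ O, q ≠ algebraMap (𝓞 K) ℍ[K] π * e := fun e he h ↦
    hπ.not_isUnit (hprim π e he h)
  obtain ⟨d, hd, hId⟩ := hclass _
    (sup_le (O.map_mulRight_le hqO) (O.map_mulRight_le (O.algebraMap_mem π)))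
    ((O.isLeftIdeal_map_mulRight q).sup (O.isLeftIdeal_map_mulRight _))
  obtain ⟨r, hr : r ∈ O, hrd : r * d = q⟩ :=
    hId ▸ Submodule.mem_sup_left (O.mem_map_mulRight_self q)
  obtain ⟨s, hs : s ∈ O, hsd : s * d = algebraMap (𝓞 K) ℍ[K] π⟩ :=
    hId ▸ Submodule.mem_sup_right (O.mem_map_mulRight_self (algebraMap (𝓞 K) ℍ[K] π))
  obtain ⟨nd, hnd⟩ := exists_algebraMap_eq_normSq (IsIntegral.of_mem_of_fg O hfg d hd)
  obtain ⟨ns, hns⟩ := exists_algebraMap_eq_normSq (IsIntegral.of_mem_of_fg O hfg s hs)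
  have hnd_unit : ¬IsUnit nd := fun hu ↦ by
    obtain ⟨y, hy, hyd⟩ := exists_mul_eq_one_of_isUnit_normSq hfg hd hnd hu
    obtain ⟨_, ⟨a, ha : a ∈ O, rfl⟩, _, ⟨b, hb : b ∈ O, rfl⟩, hab⟩ :=
      Submodule.mem_sup.1 (hId ▸ hyd ▸ O.mul_mem_map_mulRight hy d)
    obtain ⟨c, hc⟩ := hπdvd
    obtain ⟨e, he, hqe⟩ := exists_eq_algebraMap_mul_of_mul_add_mul_eq_one hfg hqO ha hb hc hab
    exact hπq e he hqe
  have hns_unit : ¬IsUnit ns := fun hu ↦ by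
    obtain ⟨e, he, rfl⟩ := exists_eq_algebraMap_mul_of_mul_eq_algebraMap hfg hs hns hu hsd
    exact hπq (r * e) (O.mul_mem hr he) (by rw [← hrd, Algebra.left_comm])
  obtain ⟨u, hu⟩ := hπ.associated_of_mul_eq_sq (mul_eq_sq_of_mul_eq_algebraMap hsd hns hnd)
    hns_unit hnd_unit
  exact ⟨r, d, hr, hd, hrd.symm, u, by rw [← hnd, hu]⟩

/-- Let `O` be a maximal order in the quaternion division algebra `ℍ(K)` of class
number 1 (every left ideal of `O` is principal), and let `q ∈ O` be `O`-primitive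
with `π ∈ 𝓞 K` a prime dividing `nr(q)`. Then `q = r·p` with `r, p ∈ O` and
`nr(p)` an associate of `π`. -/
theorem stmt15 {K : Type*} [Field K] [NumberField K]
    (h1 : IsPrincipalIdealRing (𝓞 K))
    (O : Subalgebra (𝓞 K) ℍ[K]) (hfg : O.toSubmodule.FG)
    (hspan : Submodule.span K (O : Set ℍ[K]) = ⊤)
    (hmax : ∀ O' : Subalgebra (𝓞 K) ℍ[K], O'.toSubmodule.FG →
      Submodule.span K (O' : Set ℍ[K]) = ⊤ → O ≤ O' → O' = O)
    (hdiv : ∀ x : ℍ[K], x ≠ 0 → ∃ y : ℍ[K], x * y = 1 ∧ y * x = 1)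
    (hclass : ∀ I : Submodule (𝓞 K) ℍ[K], I ≤ O.toSubmodule →
      (∀ c ∈ O, ∀ x ∈ I, c * x ∈ I) →
      ∃ d ∈ O, I = Submodule.map (@LinearMap.mulRight (𝓞 K) ℍ[K] _ _ _ IsScalarTower.right d) O.toSubmodule)
    (q : ℍ[K]) (hqO : q ∈ O)
    (hprim : ∀ (α : 𝓞 K) (r : ℍ[K]), r ∈ O →
      q = algebraMap (𝓞 K) ℍ[K] α * r → IsUnit α)
    (π : 𝓞 K) (hπ : Prime π)
    (hπdvd : ∃ c : 𝓞 K, normSq q = algebraMap (𝓞 K) K (π * c)) :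
    ∃ r p : ℍ[K], r ∈ O ∧ p ∈ O ∧ q = r * p ∧
      ∃ u : (𝓞 K)ˣ, normSq p = algebraMap (𝓞 K) K (π * (u : 𝓞 K)) :=
  stmt15_general O hfg hclass q hqO hprim π hπ hπdvd
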